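/- With r⁽ⁿ⁾ = √(r² + (nd)² - 2r(nd)cos θ), the Fresnel expansion holds: r⁽ⁿ⁾ - r = -nd·cos θ + (n²d²/(2r))·sin²θ + ε, where |ε| ≤ C·(nd)³/r² for an absolute constant C, provided nd/r ≤ 1/2. -/
import Mathlib


set_option maxHeartbeats 1600000 in
/-- Fresnel expansion of the ULA propagation distance:
`r⁽ⁿ⁾ - r = -nd cos θ + (n²d²/(2r)) sin²θ + ε` with `|ε| ≤ C (nd)³ / r²`,
for an absolute constant `C`, provided `nd/r ≤ 1/2`. -/
theorem fresnel_expansion :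
    ∃ C : ℝ, 0 < C ∧
      ∀ (r d : ℝ) (n : ℕ) (θ : ℝ), 0 < r → 0 < d → θ ∈ Set.Ioo 0 Real.pi →
        (n : ℝ) * d / r ≤ 1 / 2 →
        ∃ ε : ℝ,
          Real.sqrt (r ^ 2 + ((n : ℝ) * d) ^ 2 - 2 * r * ((n : ℝ) * d) * Real.cos θ) - r
            = -((n : ℝ) * d) * Real.cos θ
              + ((n : ℝ) ^ 2 * d ^ 2 / (2 * r)) * (Real.sin θ) ^ 2 + ε
          ∧ |ε| ≤ C * ((n : ℝ) * d) ^ 3 / r ^ 2 := by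
  refine ⟨2, by norm_num, ?_⟩
  intro r d n θ hr hd hθ hle
  set x := (n : ℝ) * d with hx
  have hx0 : 0 ≤ x := by positivity
  have hxr : x ≤ r / 2 := by
    rw [div_le_iff₀ hr] at hle; linarith
  set c := Real.cos θ with hc
  set s := Real.sin θ with hsdef
  have habs : |c| ≤ 1 := Real.abs_cos_le_one θ
  have hc1 : -1 ≤ c := (abs_le.1 habs).1
  have hc2 : c ≤ 1 := (abs_le.1 habs).2
  have hs : s ^ 2 = 1 - c ^ 2 := Real.sin_sq θ
  have hs1 : s ^ 2 ≤ 1 := by nlinarith [sq_nonneg c]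
  have hs0 : 0 ≤ s ^ 2 := sq_nonneg s
  set Q := r ^ 2 + x ^ 2 - 2 * r * x * c with hQ
  have hrxc : r / 2 ≤ r - x * c := by nlinarith
  have hQeq : Q = (r - x * c) ^ 2 + x ^ 2 * s ^ 2 := by rw [hs]; ring
  have hQge : (r / 2) ^ 2 ≤ Q := by nlinarith [sq_nonneg (x * s)]
  set S := Real.sqrt Q with hSdef
  have hS : r / 2 ≤ S := by
    have := Real.sqrt_le_sqrt hQge
    rwa [Real.sqrt_sq (by linarith : (0:ℝ) ≤ r / 2)] at this
  have hSsq : S ^ 2 = Q := Real.sq_sqrt (by nlinarith)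
  set G := r - x * c + x ^ 2 * s ^ 2 / (2 * r) with hG
  have hGge : r / 2 ≤ G := by
    have : 0 ≤ x ^ 2 * s ^ 2 / (2 * r) := by positivity
    simp only [hG]; linarith
  clear_value x c s Q S G
  refine ⟨S - G, ?_, ?_⟩
  · have hx2 : (n : ℝ) ^ 2 * d ^ 2 = x ^ 2 := by rw [hx]; ring
    rw [hx2, hG]; ring
  · -- bound
    have hdiff : S ^ 2 - G ^ 2 = x ^ 3 * c * s ^ 2 / r - x ^ 4 * s ^ 4 / (4 * r ^ 2) := by
      have h4 : s ^ 4 = (1 - c ^ 2) ^ 2 := by rw [← hs]; ring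
      rw [hSsq, hQ, hG, h4, hs]
      field_simp
      ring
    have hx3 : 0 ≤ x ^ 3 := pow_nonneg hx0 3
    have hub : c * s ^ 2 ≤ 1 := by nlinarith [sq_nonneg (1 - c), sq_nonneg (1 + c), sq_nonneg c]
    have hlb : -1 ≤ c * s ^ 2 := by nlinarith [sq_nonneg (1 - c), sq_nonneg (1 + c), sq_nonneg c]
    have hs4 : s ^ 4 ≤ 1 := by nlinarith [sq_nonneg (s ^ 2)]
    have hA1 : x ^ 3 * c * s ^ 2 ≤ x ^ 3 := by nlinarith [mul_nonneg hx3 (sub_nonneg.2 hub)]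
    have hA2 : -(x ^ 3) ≤ x ^ 3 * c * s ^ 2 := by nlinarith [mul_nonneg hx3 (by linarith : (0:ℝ) ≤ 1 + c * s ^ 2)]
    have hB0 : 0 ≤ x ^ 4 * s ^ 4 / (4 * r ^ 2) := by positivity
    have hB1 : x ^ 4 * s ^ 4 / (4 * r ^ 2) ≤ x ^ 3 / r := by
      rw [div_le_div_iff₀ (by positivity) hr]
      have e1 : x ^ 4 * s ^ 4 ≤ x ^ 4 := by nlinarith [pow_nonneg hx0 4]
      have e2 : x ^ 4 ≤ (r / 2) * x ^ 3 := by nlinarith [mul_le_mul_of_nonneg_right hxr hx3]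
      nlinarith [mul_nonneg hx3 (sq_nonneg r), mul_le_mul_of_nonneg_right e1 hr.le,
        mul_le_mul_of_nonneg_right e2 hr.le]
    have hAd1 : x ^ 3 * c * s ^ 2 / r ≤ x ^ 3 / r := by gcongr
    have hAd2 : -(x ^ 3 / r) ≤ x ^ 3 * c * s ^ 2 / r := by
      rw [show -(x ^ 3 / r) = -(x ^ 3) / r by ring]
      gcongr
    have hxr0 : 0 ≤ x ^ 3 / r := by positivity
    have hD : |S ^ 2 - G ^ 2| ≤ 2 * x ^ 3 / r := by
      rw [hdiff, abs_le]
      constructor <;> [skip; skip] <;>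
        · rw [show (2:ℝ) * x ^ 3 / r = x ^ 3 / r + x ^ 3 / r by ring] at *
          linarith
    have hsum : r ≤ S + G := by linarith
    have hfac : |S - G| * (S + G) = |S ^ 2 - G ^ 2| := by
      rw [← abs_of_nonneg (by linarith : (0:ℝ) ≤ S + G), ← abs_mul]
      congr 1; ring
    have hkey : |S - G| * r ≤ 2 * x ^ 3 / r := by
      calc |S - G| * r ≤ |S - G| * (S + G) :=
            mul_le_mul_of_nonneg_left hsum (abs_nonneg _)
        _ = |S ^ 2 - G ^ 2| := hfac
        _ ≤ 2 * x ^ 3 / r := hD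
    have hfin : |S - G| ≤ (2 * x ^ 3 / r) / r := (le_div_iff₀ hr).mpr hkey
    calc |S - G| ≤ (2 * x ^ 3 / r) / r := hfin
      _ = 2 * x ^ 3 / r ^ 2 := by rw [div_div, ← pow_two]
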